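/- Suppose for each dimension $k < n$ there is a constant $C(k) > 0$ such that every smooth projective $k$-fold of general type $Y$ satisfies $\mathrm{vol}(K_Y) \geq C(k)$. Let $n_0 = n > n_1 > \cdots > n_r \geq 1$ be integers and $\mu_0, \dots, \mu_r > 0$ real numbers satisfying, for each $1 \leq j \leq r$: $C(n_j) \leq \lceil 1 + \sum_{i=0}^{j-1} \alpha_i \rceil^{n_j} \mu_j$ where $\alpha_i \leq n_i 2^{1/n_i} / \mu_i^{1/n_i} + \delta$ for a fixed $0 < \delta < 1/n$. If moreover $\mu_0 \leq 1$, then there exists a constant $C > 0$ depending only on $n$ (and the constants $C(k)$) such that $2 + \lceil \sum_{i=0}^{r} n_i 2^{1/n_i} / \mu_i^{1/n_i} \rceil \leq \lfloor C / \mu_0^{1/n} \rfloor$. -/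
import Mathlib

private lemma aux_pow_inv (M : ℝ) (hM : 0 ≤ M) (m : ℕ) (hm : m ≠ 0) :
    ((M ^ m : ℝ)) ^ ((1:ℝ)/(m:ℝ)) = M := by
  rw [← Real.rpow_natCast M m, ← Real.rpow_mul hM, mul_one_div,
    div_self (by exact_mod_cast hm : (m:ℝ) ≠ 0), Real.rpow_one]

private lemma aux_main (m : ℕ) (hm : 1 ≤ m) (c μm M : ℝ) (hc : 0 < c) (hμ : 0 < μm)
    (hM : 1 ≤ M) (h : c ≤ M ^ m * μm) :
    (m:ℝ) * 2 ^ ((1:ℝ)/(m:ℝ)) / μm ^ ((1:ℝ)/(m:ℝ))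
      ≤ (m:ℝ) * 2 ^ ((1:ℝ)/(m:ℝ)) / c ^ ((1:ℝ)/(m:ℝ)) * M := by
  have hM0 : (0:ℝ) < M := by linarith
  have h1 : c ^ ((1:ℝ)/(m:ℝ)) ≤ (M ^ m * μm) ^ ((1:ℝ)/(m:ℝ)) :=
    Real.rpow_le_rpow hc.le h (by positivity)
  rw [Real.mul_rpow (by positivity) hμ.le, aux_pow_inv M hM0.le m (by omega)] at h1
  have hcp : 0 < c ^ ((1:ℝ)/(m:ℝ)) := Real.rpow_pos_of_pos hc _
  have hμp : 0 < μm ^ ((1:ℝ)/(m:ℝ)) := Real.rpow_pos_of_pos hμ _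
  have hA : (0:ℝ) ≤ (m:ℝ) * 2 ^ ((1:ℝ)/(m:ℝ)) := by positivity
  rw [div_mul_eq_mul_div, div_le_div_iff₀ hμp hcp]
  nlinarith [mul_le_mul_of_nonneg_left h1 hA]

/-- The numerical content of Lemma 3.11 of the paper.  Fix `n ≥ 1`, `0 < δ < 1/n` and
constants `C k > 0` for `k < n` (lower bounds for volumes of canonical bundles of
smooth projective `k`-folds of general type).  Then there is a constant `Cc > 0`
depending only on `n` (and the `C k`) such that: for every chain of strata with
dimensions `n = n₀ > n₁ > ⋯ > n_r ≥ 1`, volumes `μ_j > 0` and invariants `α_i > 0`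
satisfying `α_i ≤ n_i 2^{1/n_i} / μ_i^{1/n_i} + δ` and the subadjunction estimate
`C(n_j) ≤ ⌈1 + ∑_{i<j} α_i⌉^{n_j} μ_j` for `1 ≤ j ≤ r`, if `μ₀ ≤ 1` then
`2 + ⌈∑_{i=0}^r n_i 2^{1/n_i} / μ_i^{1/n_i}⌉ ≤ ⌊Cc / μ₀^{1/n}⌋`. -/
theorem stmt15 (n : ℕ) (hn : 1 ≤ n) (δ : ℝ) (hδ0 : 0 < δ) (hδ : δ < 1 / n)
    (C : ℕ → ℝ) (hC : ∀ k, k < n → 0 < C k) :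
    ∃ Cc : ℝ, 0 < Cc ∧
      ∀ (r : ℕ) (nseq : ℕ → ℕ) (μ α : ℕ → ℝ),
        nseq 0 = n →
        (∀ i, i < r → nseq (i + 1) < nseq i) →
        (∀ i, i ≤ r → 1 ≤ nseq i) →
        (∀ i, i ≤ r → 0 < μ i) →
        (∀ i, i ≤ r → 0 < α i) →
        (∀ i, i ≤ r → α i ≤ (nseq i : ℝ) * (2 : ℝ) ^ ((1 : ℝ) / (nseq i : ℝ))
            / (μ i) ^ ((1 : ℝ) / (nseq i : ℝ)) + δ) →
        (∀ j, 1 ≤ j → j ≤ r →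
          C (nseq j) ≤ ((⌈(1 : ℝ) + ∑ i ∈ Finset.range j, α i⌉ : ℝ)) ^ (nseq j) * μ j) →
        μ 0 ≤ 1 →
        2 + ⌈∑ i ∈ Finset.range (r + 1),
              (nseq i : ℝ) * (2 : ℝ) ^ ((1 : ℝ) / (nseq i : ℝ))
                / (μ i) ^ ((1 : ℝ) / (nseq i : ℝ))⌉
          ≤ ⌊Cc / (μ 0) ^ ((1 : ℝ) / (n : ℝ))⌋ := by
  have hn0 : (0:ℝ) < (n:ℝ) := by exact_mod_cast hn
  set K : ℝ := ∑ k ∈ Finset.range n,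
      ((k:ℝ) * 2 ^ ((1:ℝ)/(k:ℝ)) / C k ^ ((1:ℝ)/(k:ℝ)) + 1) with hKdef
  have hterm : ∀ k ∈ Finset.range n,
      (0:ℝ) ≤ (k:ℝ) * 2 ^ ((1:ℝ)/(k:ℝ)) / C k ^ ((1:ℝ)/(k:ℝ)) := by
    intro k hk
    have hck := hC k (Finset.mem_range.mp hk)
    positivity
  have hK1 : (1:ℝ) ≤ K := by
    have h1 : ∀ k ∈ Finset.range n, (1:ℝ) ≤
        (k:ℝ) * 2 ^ ((1:ℝ)/(k:ℝ)) / C k ^ ((1:ℝ)/(k:ℝ)) + 1 := by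
      intro k hk; linarith [hterm k hk]
    have h2 : ∑ _k ∈ Finset.range n, (1:ℝ) ≤ K := Finset.sum_le_sum h1
    simp only [Finset.sum_const, Finset.card_range, nsmul_eq_mul, mul_one] at h2
    have hn1 : (1:ℝ) ≤ (n:ℝ) := by exact_mod_cast hn
    linarith
  have hKk : ∀ k, k < n →
      (k:ℝ) * 2 ^ ((1:ℝ)/(k:ℝ)) / C k ^ ((1:ℝ)/(k:ℝ)) ≤ K := by
    intro k hk
    have h1 := Finset.single_le_sum
      (f := fun k : ℕ => (k:ℝ) * 2 ^ ((1:ℝ)/(k:ℝ)) / C k ^ ((1:ℝ)/(k:ℝ)) + 1)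
      (fun i hi => by linarith [hterm i hi]) (Finset.mem_range.mpr hk)
    linarith
  have h4K : (0:ℝ) < 1 + 4*K := by linarith
  have hpowpos : (0:ℝ) < (1 + 4*K)^n := pow_pos h4K n
  refine ⟨(1 + 4*K)^n * n * 2 + 3, by nlinarith, ?_⟩
  intro r nseq μ α h0 hdec hge1 hμ hα hαle hsub hμ0
  -- positivity of the terms
  have hTpos : ∀ i, i ≤ r →
      (0:ℝ) < (nseq i : ℝ) * 2 ^ ((1:ℝ)/(nseq i:ℝ)) / μ i ^ ((1:ℝ)/(nseq i:ℝ)) := by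
    intro i hi
    have h1 : (0:ℝ) < (nseq i : ℝ) := by exact_mod_cast hge1 i hi
    have h2 := hμ i hi
    positivity
  have hbound : ∀ i, i ≤ r → nseq i + i ≤ n := by
    intro i
    induction i with
    | zero => intro _; omega
    | succ k ih =>
      intro hk
      have h1 := hdec k (by omega)
      have h2 := ih (by omega)
      omega
  have hr : r ≤ n := by
    have h1 := hbound r le_rfl
    have h2 := hge1 r le_rfl
    omega
  have hμ00 := hμ 0 (Nat.zero_le r)
  have hx0 : (0:ℝ) < μ 0 ^ ((1:ℝ)/(n:ℝ)) := Real.rpow_pos_of_pos hμ00 _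
  have hx1 : μ 0 ^ ((1:ℝ)/(n:ℝ)) ≤ 1 := Real.rpow_le_one hμ00.le hμ0 (by positivity)
  have h2n : (1:ℝ) ≤ 2 ^ ((1:ℝ)/(n:ℝ)) := by
    have := Real.rpow_le_rpow_of_exponent_le (by norm_num : (1:ℝ) ≤ 2)
      (by positivity : (0:ℝ) ≤ 1/(n:ℝ))
    simpa using this
  have h2n' : (2:ℝ) ^ ((1:ℝ)/(n:ℝ)) ≤ 2 := by
    have h1n : (1:ℝ)/(n:ℝ) ≤ 1 := by
      rw [div_le_one hn0]; exact_mod_cast hn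
    have := Real.rpow_le_rpow_of_exponent_le (by norm_num : (1:ℝ) ≤ 2) h1n
    simpa using this
  have hT0 : (1:ℝ) ≤ (nseq 0 : ℝ) * 2 ^ ((1:ℝ)/(nseq 0:ℝ)) / μ 0 ^ ((1:ℝ)/(nseq 0:ℝ)) := by
    rw [h0, le_div_iff₀ hx0, one_mul]
    have hn1 : (1:ℝ) ≤ (n:ℝ) := by exact_mod_cast hn
    nlinarith
  have claim : ∀ j, j ≤ r →
      ∑ i ∈ Finset.range (j+1),
          (nseq i : ℝ) * 2 ^ ((1:ℝ)/(nseq i:ℝ)) / μ i ^ ((1:ℝ)/(nseq i:ℝ))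
        ≤ (1 + 4*K)^j *
          ((nseq 0 : ℝ) * 2 ^ ((1:ℝ)/(nseq 0:ℝ)) / μ 0 ^ ((1:ℝ)/(nseq 0:ℝ))) := by
    intro j
    induction j with
    | zero => intro _; simp
    | succ j ih =>
      intro hj
      have hjr : j ≤ r := by omega
      have ihS := ih hjr
      set S := ∑ i ∈ Finset.range (j+1),
          (nseq i : ℝ) * 2 ^ ((1:ℝ)/(nseq i:ℝ)) / μ i ^ ((1:ℝ)/(nseq i:ℝ)) with hSdef
      have hS1 : (1:ℝ) ≤ S := by
        have h1 : (nseq 0 : ℝ) * 2 ^ ((1:ℝ)/(nseq 0:ℝ)) / μ 0 ^ ((1:ℝ)/(nseq 0:ℝ)) ≤ S :=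
          Finset.single_le_sum
            (f := fun i => (nseq i : ℝ) * 2 ^ ((1:ℝ)/(nseq i:ℝ)) / μ i ^ ((1:ℝ)/(nseq i:ℝ)))
            (fun i hi => (hTpos i (by have := Finset.mem_range.mp hi; omega)).le)
            (Finset.mem_range.mpr (by omega))
        linarith
      set M := ((⌈(1:ℝ) + ∑ i ∈ Finset.range (j+1), α i⌉ : ℤ) : ℝ) with hMdef
      have hsumα0 : (0:ℝ) ≤ ∑ i ∈ Finset.range (j+1), α i :=
        Finset.sum_nonneg fun i hi =>
          (hα i (by have := Finset.mem_range.mp hi; omega)).le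
      have hM1 : (1:ℝ) ≤ M := by
        have := Int.le_ceil ((1:ℝ) + ∑ i ∈ Finset.range (j+1), α i)
        linarith
      have hsumαle : ∑ i ∈ Finset.range (j+1), α i ≤ S + ((j:ℝ)+1) * δ := by
        have h1 : ∑ i ∈ Finset.range (j+1), α i ≤
            ∑ i ∈ Finset.range (j+1),
              ((nseq i : ℝ) * 2 ^ ((1:ℝ)/(nseq i:ℝ)) / μ i ^ ((1:ℝ)/(nseq i:ℝ)) + δ) :=
          Finset.sum_le_sum fun i hi =>
            hαle i (by have := Finset.mem_range.mp hi; omega)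
        rw [Finset.sum_add_distrib, Finset.sum_const, Finset.card_range,
          nsmul_eq_mul] at h1
        push_cast at h1 ⊢
        linarith
      have hjδ : ((j:ℝ)+1) * δ ≤ 1 := by
        have hjn : ((j:ℝ)+1) ≤ (n:ℝ) := by exact_mod_cast (by omega : j + 1 ≤ n)
        have h1 : (n:ℝ) * δ < (n:ℝ) * (1/(n:ℝ)) :=
          mul_lt_mul_of_pos_left hδ hn0
        rw [mul_one_div, div_self hn0.ne'] at h1
        nlinarith
      have hMle : M ≤ 4 * S := by
        have h1 := Int.ceil_lt_add_one ((1:ℝ) + ∑ i ∈ Finset.range (j+1), α i)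
        have : M < 2 + (S + ((j:ℝ)+1) * δ) := by
          rw [hMdef]; linarith
        linarith
      have hnj1 : nseq (j+1) < n := by
        have := hbound (j+1) hj
        omega
      have hsubj := hsub (j+1) (by omega) hj
      have haux := aux_main (nseq (j+1)) (hge1 (j+1) hj) (C (nseq (j+1))) (μ (j+1)) M
        (hC _ hnj1) (hμ (j+1) hj) hM1 hsubj
      have hKle := hKk (nseq (j+1)) hnj1
      have hM0 : (0:ℝ) ≤ M := by linarith
      have hTj : (nseq (j+1) : ℝ) * 2 ^ ((1:ℝ)/(nseq (j+1):ℝ))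
          / μ (j+1) ^ ((1:ℝ)/(nseq (j+1):ℝ)) ≤ K * M := by
        calc (nseq (j+1) : ℝ) * 2 ^ ((1:ℝ)/(nseq (j+1):ℝ))
            / μ (j+1) ^ ((1:ℝ)/(nseq (j+1):ℝ))
            ≤ (nseq (j+1) : ℝ) * 2 ^ ((1:ℝ)/(nseq (j+1):ℝ))
              / C (nseq (j+1)) ^ ((1:ℝ)/(nseq (j+1):ℝ)) * M := haux
          _ ≤ K * M := mul_le_mul_of_nonneg_right hKle hM0
      have hTj4 : (nseq (j+1) : ℝ) * 2 ^ ((1:ℝ)/(nseq (j+1):ℝ))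
          / μ (j+1) ^ ((1:ℝ)/(nseq (j+1):ℝ)) ≤ 4 * K * S := by
        have h2 : K * M ≤ K * (4 * S) :=
          mul_le_mul_of_nonneg_left hMle (by linarith)
        calc _ ≤ K * M := hTj
          _ ≤ K * (4 * S) := h2
          _ = 4 * K * S := by ring
      rw [Finset.sum_range_succ]
      have hfin1 : S + (nseq (j+1) : ℝ) * 2 ^ ((1:ℝ)/(nseq (j+1):ℝ))
          / μ (j+1) ^ ((1:ℝ)/(nseq (j+1):ℝ)) ≤ (1 + 4*K) * S := by linarith
      have hfin2 : (1 + 4*K) * S ≤ (1 + 4*K) * ((1 + 4*K)^j *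
          ((nseq 0 : ℝ) * 2 ^ ((1:ℝ)/(nseq 0:ℝ)) / μ 0 ^ ((1:ℝ)/(nseq 0:ℝ)))) :=
        mul_le_mul_of_nonneg_left ihS (by linarith)
      calc S + (nseq (j+1) : ℝ) * 2 ^ ((1:ℝ)/(nseq (j+1):ℝ))
            / μ (j+1) ^ ((1:ℝ)/(nseq (j+1):ℝ))
          ≤ (1 + 4*K) * S := hfin1
        _ ≤ (1 + 4*K) * ((1 + 4*K)^j *
            ((nseq 0 : ℝ) * 2 ^ ((1:ℝ)/(nseq 0:ℝ)) / μ 0 ^ ((1:ℝ)/(nseq 0:ℝ)))) := hfin2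
        _ = (1 + 4*K)^(j+1) *
            ((nseq 0 : ℝ) * 2 ^ ((1:ℝ)/(nseq 0:ℝ)) / μ 0 ^ ((1:ℝ)/(nseq 0:ℝ))) := by
            ring
  have hfin := claim r le_rfl
  rw [h0] at hfin
  set x := μ 0 ^ ((1:ℝ)/(n:ℝ)) with hxdef
  set Ssum := ∑ i ∈ Finset.range (r+1),
      (nseq i : ℝ) * 2 ^ ((1:ℝ)/(nseq i:ℝ)) / μ i ^ ((1:ℝ)/(nseq i:ℝ)) with hSsumdef
  have hpowle : (1 + 4*K)^r ≤ (1 + 4*K)^n :=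
    pow_le_pow_right₀ (by linarith) hr
  have hE0pos : (0:ℝ) < (n:ℝ) * 2 ^ ((1:ℝ)/(n:ℝ)) / x := by positivity
  have hstep1 : Ssum ≤ (1 + 4*K)^n * ((n:ℝ) * 2 ^ ((1:ℝ)/(n:ℝ)) / x) := by
    calc Ssum ≤ (1 + 4*K)^r * ((n:ℝ) * 2 ^ ((1:ℝ)/(n:ℝ)) / x) := hfin
      _ ≤ (1 + 4*K)^n * ((n:ℝ) * 2 ^ ((1:ℝ)/(n:ℝ)) / x) :=
        mul_le_mul_of_nonneg_right hpowle hE0pos.le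
  have hstep2 : (n:ℝ) * 2 ^ ((1:ℝ)/(n:ℝ)) / x ≤ (n:ℝ) * 2 / x := by
    gcongr
  have hD : Ssum ≤ (1 + 4*K)^n * n * 2 / x := by
    have h1 : (1 + 4*K)^n * ((n:ℝ) * 2 ^ ((1:ℝ)/(n:ℝ)) / x)
        ≤ (1 + 4*K)^n * ((n:ℝ) * 2 / x) :=
      mul_le_mul_of_nonneg_left hstep2 hpowpos.le
    have h2 : (1 + 4*K)^n * ((n:ℝ) * 2 / x) = (1 + 4*K)^n * n * 2 / x := by ring
    linarith
  rw [Int.le_floor]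
  push_cast
  have hceil : ((⌈Ssum⌉ : ℤ) : ℝ) ≤ Ssum + 1 := (Int.ceil_lt_add_one _).le
  have h3x : (3:ℝ) ≤ 3 / x := by
    rw [le_div_iff₀ hx0]; linarith
  have hsplit : ((1 + 4*K)^n * n * 2 + 3) / x = (1 + 4*K)^n * n * 2 / x + 3 / x := by
    ring
  rw [hsplit]
  linarith
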